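/- Let n ≥ 1 and let ζ = (ζ_1, ..., ζ_n) be an n-tuple of roots of unity in ℂ whose order as an element of the group (ℂ^×)^n is exactly N, with N ≥ 2^(2n) + 1. Then there exist a divisor e of N with e ≤ N^(1 - 1/(2n)), a primitive N-th root of unity ζ_N, e-th roots of unity ξ_1, ..., ξ_n, and integers k_1, ..., k_n with |k_i| ≤ N^(1 - 1/(2n))/e for all i, such that ζ_i = ξ_i · ζ_N^(k_i) for all i = 1, ..., n. -/

import Mathlib

/-!
Fix a primitive `N`-th root of unity `g` and write `ζ i = g ^ a i`. Put `T = N ^ (1 - 1/(2n))`.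
Pigeonholing the vectors `(q * a i mod N)_i` into `B ^ n ≤ ⌊T⌋` boxes of side `⌊T⌋ + 1`, with
`B ≈ N ^ (1/(2n))` (this count is where `N > 2 ^ (2n)` is needed), gives `0 < q ≤ T` and
residues `q * a i ≡ r i [ZMOD N]` with `|r i| ≤ T`. With `e = gcd q N` every `r i = e * k i`, and
`a i ≡ w * k i` modulo `N / e`, where `w` is an inverse of `q / e` modulo `N / e` chosen coprime
to `N`. Hence `ζN = g ^ w` is again primitive and `ξ i = ζ i * ζN ^ (-k i)` is an `e`-th root of
unity. For `n = 1` one simply takes `ζN = ζ 0`.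
-/

open Finset

theorem Int.abs_sub_lt_of_ediv_eq {x y m : ℤ} (hm : 0 < m) (h : x / m = y / m) :
    |x - y| < m := by
  have hxy : x - y = x % m - y % m := by
    linarith [Int.emod_add_mul_ediv x m, Int.emod_add_mul_ediv y m, congrArg (m * ·) h]
  rw [hxy]
  exact abs_sub_lt_of_nonneg_of_lt (Int.emod_nonneg x hm.ne') (Int.emod_lt_of_pos x hm)
    (Int.emod_nonneg y hm.ne') (Int.emod_lt_of_pos y hm)

/-- Dirichlet's simultaneous approximation, modulo `N`. -/
theorem exists_mul_modEq_abs_lt {ι : Type*} [Fintype ι] (a : ι → ℤ) {N m B : ℕ}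
    (hN : 0 < N) (hm : 0 < m) (hB : N ≤ B * m) :
    ∃ q : ℕ, 0 < q ∧ q ≤ B ^ Fintype.card ι ∧
      ∃ r : ι → ℤ, (∀ i, |r i| < m) ∧ ∀ i, q * a i ≡ r i [ZMOD N] := by
  classical
  have hmaps : ∀ q ∈ range (B ^ Fintype.card ι + 1),
      (fun i => q * a i % N / m) ∈ Fintype.piFinset fun _ : ι => Ico (0 : ℤ) B := by
    intro q _
    simp only [Fintype.mem_piFinset, mem_Ico]
    intro i
    refine ⟨Int.ediv_nonneg (Int.emod_nonneg _ (by positivity)) (by positivity),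
      (Int.ediv_lt_iff_lt_mul (by positivity)).2 ?_⟩
    exact (Int.emod_lt_of_pos _ (by positivity)).trans_le (by exact_mod_cast hB)
  have hcard : #(Fintype.piFinset fun _ : ι => Ico (0 : ℤ) B) <
      #(range (B ^ Fintype.card ι + 1)) := by
    simp [Fintype.card_piFinset]
  obtain ⟨q₁, hq₁, q₂, hq₂, hne, heq⟩ := exists_ne_map_eq_of_card_lt_of_maps_to hcard hmaps
  wlog hlt : q₁ < q₂ generalizing q₁ q₂
  · exact this q₂ hq₂ q₁ hq₁ hne.symm heq.symm (by omega)
  rw [mem_range] at hq₂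
  refine ⟨q₂ - q₁, by omega, by omega, fun i => q₂ * a i % N - q₁ * a i % N,
    fun i => Int.abs_sub_lt_of_ediv_eq (by positivity) (congrFun heq i).symm, fun i => ?_⟩
  push_cast [Nat.cast_sub hlt.le]
  rw [sub_mul]
  exact (Int.mod_modEq _ _).symm.sub (Int.mod_modEq _ _).symm

theorem Nat.succ_pow_le_pow_two_mul_sub_one {b n : ℕ} (h : 3 ≤ b ∧ 2 ≤ n ∨ 2 ≤ b ∧ 3 ≤ n) :
    (b + 1) ^ n ≤ b ^ (2 * n - 1) := by
  obtain hb | rfl : 3 ≤ b ∨ b = 2 := by omega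
  · rw [← Nat.pow_le_pow_iff_left two_ne_zero, ← pow_mul, mul_comm, pow_mul]
    calc ((b + 1) ^ 2) ^ n ≤ (b ^ 3) ^ n := Nat.pow_le_pow_left (by nlinarith) n
      _ = b ^ (3 * n) := (pow_mul b 3 n).symm
      _ ≤ b ^ ((2 * n - 1) * 2) := Nat.pow_le_pow_right (by omega) (by omega)
      _ = (b ^ (2 * n - 1)) ^ 2 := pow_mul b _ 2
  have hn : 3 ≤ n := by omega
  clear h
  induction n, hn using Nat.le_induction with
  | base => norm_num
  | succ n hn ih =>
    rw [show 2 * (n + 1) - 1 = 2 * n - 1 + 2 by omega, pow_succ, pow_add]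
    exact Nat.mul_le_mul ih (by norm_num)

theorem exists_le_mul_succ_and_pow_le {n N Q : ℕ} (hn : 2 ≤ n) (hN : 2 ^ (2 * n) < N)
    (hQ : N ^ (2 * n - 1) < (Q + 1) ^ (2 * n)) : ∃ B, N ≤ B * (Q + 1) ∧ B ^ n ≤ Q := by
  have hb : Nat.nthRoot (2 * n) (N - 1) ^ (2 * n) ≤ N - 1 :=
    Nat.pow_nthRoot_le_iff.2 (.inl (by omega))
  have hb' := Nat.lt_pow_nthRoot_add_one (show 2 * n ≠ 0 by omega) (N - 1)
  generalize Nat.nthRoot (2 * n) (N - 1) = b at hb hb'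
  have hN1 : 1 ≤ N := Nat.one_le_two_pow.trans hN.le
  replace hb : b ^ (2 * n) < N := by omega
  replace hb' : N ≤ (b + 1) ^ (2 * n) := by omega
  have hb2 : 2 ≤ b := by
    by_contra! hb2
    exact absurd (hN.trans_le hb') (Nat.pow_le_pow_left (show b + 1 ≤ 2 by omega) (2 * n)).not_gt
  have hcover : N < (b + 1) * (Q + 1) := by
    refine lt_of_pow_lt_pow_left₀ (2 * n) (Nat.zero_le _) ?_
    calc N ^ (2 * n) = N * N ^ (2 * n - 1) := by rw [← pow_succ']; congr 1; omega
      _ < (b + 1) ^ (2 * n) * (Q + 1) ^ (2 * n) := Nat.mul_lt_mul_of_le_of_lt hb' hQ (by positivity)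
      _ = ((b + 1) * (Q + 1)) ^ (2 * n) := (mul_pow _ _ _).symm
  by_cases hbn : (b + 1) ^ n ≤ b ^ (2 * n - 1)
  · refine ⟨b + 1, hcover.le, Nat.lt_succ_iff.1 (lt_of_pow_lt_pow_left₀ (2 * n) (Nat.zero_le _) ?_)⟩
    calc ((b + 1) ^ n) ^ (2 * n) ≤ (b ^ (2 * n - 1)) ^ (2 * n) := Nat.pow_le_pow_left hbn _
      _ = (b ^ (2 * n)) ^ (2 * n - 1) := by rw [← pow_mul, ← pow_mul, mul_comm]
      _ ≤ N ^ (2 * n - 1) := Nat.pow_le_pow_left hb.le _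
      _ < (Q + 1) ^ (2 * n) := hQ
  -- the one exceptional case `b = n = 2`, i.e. `16 < N ≤ 81` in dimension two
  obtain ⟨rfl, rfl⟩ : b = 2 ∧ n = 2 := by
    by_contra! h
    exact hbn (Nat.succ_pow_le_pow_two_mul_sub_one (by omega))
  norm_num at hQ hN hcover
  have hQ8 : 8 ≤ Q := by
    by_contra! hQ8
    have := Nat.pow_le_pow_left (show Q + 1 ≤ 8 by omega) 4
    have := Nat.pow_le_pow_left (show 17 ≤ N by omega) 3
    omega
  obtain rfl | hQ9 := (show Q = 8 ∨ 9 ≤ Q by omega)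
  · refine ⟨2, ?_, by norm_num⟩
    by_contra! h19
    have := Nat.pow_le_pow_left (show 19 ≤ N by omega) 3
    omega
  · exact ⟨3, by omega, by omega⟩

theorem pow_two_mul_sub_one_lt_floor_rpow_add_one_pow (N : ℕ) {n : ℕ} (hn : n ≠ 0) :
    N ^ (2 * n - 1) < (⌊(N : ℝ) ^ ((1 : ℝ) - 1 / (2 * n))⌋₊ + 1) ^ (2 * n) := by
  have hpow : ((N : ℝ) ^ ((1 : ℝ) - 1 / (2 * n))) ^ (2 * n) = (N : ℝ) ^ (2 * n - 1) := by
    rw [← Real.rpow_natCast _ (2 * n), ← Real.rpow_mul (Nat.cast_nonneg N), ← Real.rpow_natCast]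
    congr 1
    have : (n : ℝ) ≠ 0 := by exact_mod_cast hn
    push_cast [Nat.cast_sub (show 1 ≤ 2 * n by omega)]
    field_simp
  have := pow_lt_pow_left₀ (Nat.lt_floor_add_one ((N : ℝ) ^ ((1 : ℝ) - 1 / (2 * n))))
    (by positivity) (show 2 * n ≠ 0 by omega)
  rw [hpow] at this
  exact_mod_cast this

theorem exists_coprime_mul_modEq_one {a n N : ℕ} [NeZero N] (ha : a.Coprime n) (hn : n ∣ N) :
    ∃ w : ℕ, w.Coprime N ∧ w * a ≡ 1 [MOD n] := by
  obtain ⟨W, hW⟩ := ZMod.unitsMap_surjective hn (ZMod.unitOfCoprime a ha)⁻¹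
  refine ⟨(W : ZMod N).val, ZMod.val_coe_unit_coprime W, ?_⟩
  rw [← ZMod.natCast_eq_natCast_iff]
  have hw : ((W : ZMod N).val : ZMod n) = ((ZMod.unitOfCoprime a ha)⁻¹ : (ZMod n)ˣ) := by
    rw [← hW, ZMod.natCast_val, ZMod.unitsMap_def]
    rfl
  push_cast
  rw [hw, ← ZMod.coe_unitOfCoprime a ha, ← Units.val_mul, inv_mul_cancel, Units.val_one]

theorem exists_zpow_eq_mul_zpow {G : Type*} [CommGroup G] {g : G} {N : ℕ} [NeZero N]
    (hg : orderOf g = N) {ι : Type*} {a r : ι → ℤ} {q : ℕ} (h : ∀ i, q * a i ≡ r i [ZMOD N]) :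
    ∃ g' : G, orderOf g' = N ∧ ∃ (ξ : ι → G) (k : ι → ℤ), (∀ i, ξ i ^ q.gcd N = 1) ∧
      (∀ i, r i = q.gcd N * k i) ∧ ∀ i, g ^ a i = ξ i * g' ^ k i := by
  obtain ⟨q', N', hcop, hq, hN⟩ := Nat.exists_coprime q N
  set d := q.gcd N
  obtain ⟨w, hwN, hw⟩ := exists_coprime_mul_modEq_one hcop (Dvd.intro d hN.symm)
  obtain ⟨t, ht⟩ : (N' : ℤ) ∣ 1 - w * q' := by exact_mod_cast (Nat.modEq_iff_dvd.1 hw)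
  have hk : ∀ i, ∃ k, r i = d * k ∧ (N' : ℤ) ∣ a i - w * k := by
    intro i
    obtain ⟨c, hc⟩ := (h i).dvd
    refine ⟨q' * a i + N' * c, ?_, a i * t - w * c, ?_⟩
    · rw [hq, hN] at hc
      push_cast at hc
      linear_combination hc
    · linear_combination a i * ht
  choose k hrk hak using hk
  refine ⟨g ^ w, by rw [Nat.Coprime.orderOf_pow (hg ▸ hwN.symm), hg],
    fun i => g ^ (a i - w * k i), k, fun i => ?_, hrk, fun i => ?_⟩
  · rw [← zpow_natCast, ← zpow_mul, ← orderOf_dvd_iff_zpow_eq_one, hg, hN]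
    push_cast
    exact mul_dvd_mul_right (hak i) _
  · rw [← zpow_natCast, ← zpow_mul, ← zpow_add, sub_add_cancel]

theorem Complex.exists_orderOf_eq_forall_zpow_eq {N : ℕ} [NeZero N] {ι : Type*} {ζ : ι → ℂˣ}
    (hζ : ζ ^ N = 1) : ∃ g : ℂˣ, orderOf g = N ∧ ∃ a : ι → ℤ, ∀ i, g ^ a i = ζ i := by
  have hg := (Complex.isPrimitiveRoot_exp N (NeZero.ne N)).isUnit_unit (NeZero.ne N)
  refine ⟨_, hg.eq_orderOf.symm, ?_⟩
  choose a ha using fun i => Subgroup.mem_zpowers_iff.1 <| by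
    rw [hg.zpowers_eq, _root_.mem_rootsOfUnity]
    exact congrFun hζ i
  exact ⟨a, ha⟩

/-- Lemma 3: a torsion point `ζ ∈ (ℂˣ)^n` of order `N ≥ 2^(2n)+1` can be
written coordinatewise as `ζ_i = ξ_i · ζ_N^(k_i)` with `ξ_i` an `e`-th root of
unity, `e ∣ N`, `e ≤ N^(1-1/(2n))`, `ζ_N` a primitive `N`-th root of unity and
`|k_i| ≤ N^(1-1/(2n))/e`. -/
theorem stmt_5 (n : ℕ) (hn : 1 ≤ n) (N : ℕ) (hN : 2 ^ (2 * n) + 1 ≤ N)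
    (ζ : Fin n → ℂˣ) (hord : orderOf ζ = N) :
    ∃ e : ℕ, e ∣ N ∧ (e : ℝ) ≤ (N : ℝ) ^ ((1 : ℝ) - 1 / (2 * n)) ∧
      ∃ ζN : ℂˣ, orderOf ζN = N ∧
        ∃ (ξ : Fin n → ℂˣ) (k : Fin n → ℤ),
          (∀ i, ξ i ^ e = 1) ∧
          (∀ i, (|k i| : ℝ) ≤ (N : ℝ) ^ ((1 : ℝ) - 1 / (2 * n)) / e) ∧
          ∀ i, ζ i = ξ i * ζN ^ (k i) := by
  have hN0 : 0 < N := (Nat.two_pow_pos (2 * n)).trans hN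
  obtain rfl | hn2 : n = 1 ∨ 2 ≤ n := by omega
  · have hT1 : 1 ≤ (N : ℝ) ^ ((1 : ℝ) - 1 / (2 * ((1 : ℕ) : ℝ))) :=
      Real.one_le_rpow (by exact_mod_cast hN0) (by norm_num)
    refine ⟨1, one_dvd N, by simpa using hT1, ζ 0, by simpa [Pi.orderOf] using hord, 1, 1,
      by simp, by simpa using hT1, fun i => by simp [Subsingleton.elim i 0]⟩
  have : NeZero N := ⟨hN0.ne'⟩
  obtain ⟨g, hg, a, ha⟩ := Complex.exists_orderOf_eq_forall_zpow_eq (hord ▸ pow_orderOf_eq_one ζ)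
  obtain ⟨B, hNB, hBQ⟩ := exists_le_mul_succ_and_pow_le hn2 hN
    (pow_two_mul_sub_one_lt_floor_rpow_add_one_pow N (n := n) (by omega))
  have hT0 : 0 ≤ (N : ℝ) ^ ((1 : ℝ) - 1 / (2 * n)) := by positivity
  generalize (N : ℝ) ^ ((1 : ℝ) - 1 / (2 * n)) = T at hT0 hNB hBQ ⊢
  obtain ⟨q, hq0, hqB, r, hr, hqr⟩ := exists_mul_modEq_abs_lt a hN0 (Nat.succ_pos _) hNB
  obtain ⟨ζN, hζN, ξ, k, hξ, hrk, hak⟩ := exists_zpow_eq_mul_zpow hg hqr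
  have hQT : (⌊T⌋₊ : ℝ) ≤ T := Nat.floor_le hT0
  refine ⟨q.gcd N, Nat.gcd_dvd_right q N, ?_, ζN, hζN, ξ, k, hξ, fun i => ?_,
    fun i => (ha i).symm.trans (hak i)⟩
  · have : q.gcd N ≤ ⌊T⌋₊ := (Nat.gcd_le_left N hq0).trans (hqB.trans (by simpa using hBQ))
    exact (Nat.cast_le.2 this).trans hQT
  · have hkr : (q.gcd N : ℤ) * |k i| ≤ ⌊T⌋₊ :=
      Int.lt_add_one_iff.1 (by simpa [hrk i, abs_mul] using hr i)
    rw [le_div_iff₀ (by exact_mod_cast Nat.gcd_pos_of_pos_right q hN0), mul_comm]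
    exact le_trans (by exact_mod_cast hkr) hQT
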